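/- (Lawler's Green function identity) For an irreducible Markov chain on a finite state space, for any set Z of states and any two states a, b ∉ Z with V \ Z having at least two elements, G_Z(b,b) · G_{Z∪{b}}(a,a) = G_Z(a,a) · G_{Z∪{a}}(b,b), where G_S(v,v) is the expected number of visits to v strictly before hitting S, starting from v. -/

import Mathlib

open scoped Classical

/-- Extend a finite path `γ : Fin (n+1) → V` to a function `ℕ → V`. -/
def pad {V : Type*} {n : ℕ} (γ : Fin (n + 1) → V) : ℕ → V :=
  fun i => γ ⟨min i n, by omega⟩

/-- The Green function `G_Z(a, a)`: the expected number of visits to `a` strictly before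
hitting `Z`, for the chain with transition probabilities `p` started at `a`. -/
noncomputable def green {V : Type*} [Fintype V] (p : V → V → ℝ) (Z : Set V) (a : V) : ℝ :=
  ∑' n : ℕ, ∑ γ : Fin (n + 1) → V,
    if pad γ 0 = a ∧ pad γ n = a ∧ ∀ i ≤ n, pad γ i ∉ Z then
      ∏ k ∈ Finset.range n, p (pad γ k) (pad γ (k + 1)) else 0

/-!
Kill the chain on entering `W`: the substochastic matrix `Q_W` (`killedMatrix p W`) keeps the
transitions between states outside `W`. Expanding `(Q_W ^ n) a a` as a sum over paths identifies
`G_W(a,a)` with `∑ₙ (Q_W ^ n) a a`. Since `W` is reachable from every state, the row sums of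
`Q_W ^ n` decay geometrically, so this Neumann series converges to `(1 - Q_W)⁻¹`, and Cramer's
rule gives `G_W(a,a) = det (1 - Q_{W ∪ {a}}) / det (1 - Q_W)`, the cofactor of `1 - Q_W` at
`(a,a)` being `det (1 - Q_{W ∪ {a}})`. Both sides of the identity then equal
`det (1 - Q_{Z ∪ {a,b}}) / det (1 - Q_Z)`.
-/

namespace Matrix

variable {V R : Type*} [Fintype V] [DecidableEq V]

theorem pow_apply_eq_sum_paths [CommSemiring R] (M : Matrix V V R) (n : ℕ) (a c : V) :
    (M ^ n) a c = ∑ γ : Fin (n + 1) → V,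
      if γ 0 = a ∧ γ (Fin.last n) = c then ∏ k : Fin n, M (γ k.castSucc) (γ k.succ) else 0 := by
  induction n generalizing a with
  | zero =>
    rw [pow_zero, one_apply, ← (Equiv.funUnique (Fin 1) V).symm.sum_comp]
    simp [Fin.last, ite_and, eq_comm]
  | succ n ih =>
    rw [pow_succ', mul_apply, ← (Fin.consEquiv fun _ => V).sum_comp, Fintype.sum_prod_type]
    simp only [ih, Finset.mul_sum, Fin.consEquiv_apply, Fin.cons_zero, ← Fin.succ_last,
      Fin.cons_succ, Fin.prod_univ_succ, Fin.castSucc_zero, ← Fin.succ_castSucc, mul_ite,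
      mul_zero, ite_and]
    rw [Finset.sum_comm]
    simp

theorem adjugate_apply_self_eq_det [CommRing R] {A B : Matrix V V R} {b : V}
    (hBb : B b = Pi.single b 1) (hB : ∀ i ≠ b, B i b = 0)
    (hAB : ∀ i ≠ b, ∀ j ≠ b, A i j = B i j) : A.adjugate b b = B.det := by
  rw [adjugate_apply]
  refine det_eq_of_forall_row_eq_smul_add_const (fun i => if i = b then 0 else A i b) b
    (if_pos rfl) fun i j => ?_
  by_cases hi : i = b
  · subst hi; simp [hBb]
  · by_cases hj : j = b
    · subst hj; simp [hi, hB i hi, hBb]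
    · simp [hi, hj, hBb, hAB i hi j hj]

theorem sum_pow_add_apply [Semiring R] (M : Matrix V V R) (m n : ℕ) (u : V) :
    ∑ v, (M ^ (m + n)) u v = ∑ w, (M ^ m) u w * ∑ v, (M ^ n) w v := by
  simp only [pow_add, mul_apply, Finset.mul_sum]
  exact Finset.sum_comm

section Substochastic

variable {M : Matrix V V ℝ} (hM : ∀ i j, 0 ≤ M i j) (hrow : ∀ i, ∑ j, M i j ≤ 1)
include hM

theorem sum_pow_add_apply_le {n : ℕ} {s : ℝ} (hs : ∀ w, ∑ v, (M ^ n) w v ≤ s) (m : ℕ) (u : V) :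
    ∑ v, (M ^ (m + n)) u v ≤ (∑ v, (M ^ m) u v) * s := by
  rw [sum_pow_add_apply, Finset.sum_mul]
  exact Finset.sum_le_sum fun w _ => mul_le_mul_of_nonneg_left (hs w) (pow_apply_nonneg hM m u w)

theorem sum_pow_mul_apply_le_pow {N : ℕ} {r : ℝ} (hr0 : 0 ≤ r)
    (hr : ∀ w, ∑ v, (M ^ N) w v ≤ r) (k : ℕ) (u : V) : ∑ v, (M ^ (N * k)) u v ≤ r ^ k := by
  induction k with
  | zero => simp [one_apply]
  | succ k ih =>
    calc ∑ v, (M ^ (N * k + N)) u v ≤ (∑ v, (M ^ (N * k)) u v) * r :=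
          sum_pow_add_apply_le hM hr _ u
      _ ≤ r ^ k * r := mul_le_mul_of_nonneg_right ih hr0

include hrow

theorem antitone_sum_pow_apply (u : V) : Antitone fun n => ∑ v, (M ^ n) u v :=
  antitone_nat_of_succ_le fun n => by
    simpa only [mul_one] using sum_pow_add_apply_le hM (n := 1) (s := 1) (by simpa using hrow) n u

theorem sum_pow_apply_le_one (n : ℕ) (u : V) : ∑ v, (M ^ n) u v ≤ 1 := by
  simpa [one_apply] using antitone_sum_pow_apply hM hrow u (Nat.zero_le n)

theorem sum_pow_one_add_apply_lt_one {x c : V} (hxc : 0 < M x c) {n : ℕ}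
    (hc : ∑ v, (M ^ n) c v < 1) : ∑ v, (M ^ (1 + n)) x v < 1 := by
  rw [sum_pow_add_apply, pow_one]
  calc ∑ w, M x w * ∑ v, (M ^ n) w v < ∑ w, M x w :=
        Finset.sum_lt_sum
          (fun w _ => mul_le_of_le_one_right (hM x w) (sum_pow_apply_le_one hM hrow n w))
          ⟨c, Finset.mem_univ c, mul_lt_of_lt_one_right hxc hc⟩
    _ ≤ 1 := hrow x

theorem exists_sum_pow_apply_lt_one {u c : V}
    (huc : Relation.ReflTransGen (fun i j => 0 < M i j) u c) (hc : ∑ j, M c j < 1) :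
    ∃ n, ∑ v, (M ^ n) u v < 1 := by
  induction huc using Relation.ReflTransGen.head_induction_on with
  | refl => exact ⟨1, by simpa using hc⟩
  | head hxy _ ih =>
    obtain ⟨n, hn⟩ := ih
    exact ⟨1 + n, sum_pow_one_add_apply_lt_one hM hrow hxy hn⟩

theorem exists_forall_sum_pow_apply_le_lt_one (hleak : ∀ u, ∃ n, ∑ v, (M ^ n) u v < 1) :
    ∃ N r, 0 < N ∧ 0 ≤ r ∧ r < 1 ∧ ∀ u, ∑ v, (M ^ N) u v ≤ r := by
  choose f hf using hleak
  set N := Finset.univ.sup f + 1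
  have hN : ∀ u, ∑ v, (M ^ N) u v < 1 := fun u =>
    (antitone_sum_pow_apply hM hrow u
      ((Finset.le_sup (Finset.mem_univ u)).trans (Nat.le_succ _))).trans_lt (hf u)
  rcases isEmpty_or_nonempty V with hV | hV
  · exact ⟨N, 0, Nat.succ_pos _, le_rfl, one_pos, isEmptyElim⟩
  obtain ⟨u₀, hu₀⟩ := Finite.exists_max fun u => ∑ v, (M ^ N) u v
  exact ⟨N, _, Nat.succ_pos _, Finset.sum_nonneg fun v _ => pow_apply_nonneg hM N u₀ v, hN u₀,
    hu₀⟩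

theorem summable_sum_pow_apply (hleak : ∀ u, ∃ n, ∑ v, (M ^ n) u v < 1) (u : V) :
    Summable fun n => ∑ v, (M ^ n) u v := by
  obtain ⟨N, r, hN, hr0, hr1, hr⟩ := exists_forall_sum_pow_apply_le_lt_one hM hrow hleak
  have hblock : ∀ k, ((N * (k + 1 + 1) : ℕ) - (N * (k + 1) : ℕ) : ℝ) = N := fun k => by
    push_cast; ring
  -- Schlömilch condensation along the multiples of `N`, where the row sums decay like `r ^ k`.
  refine (summable_schlomilch_iff_of_nonneg (C := 1) (u := fun k => N * (k + 1))
    (fun n => Finset.sum_nonneg fun v _ => pow_apply_nonneg hM n u v)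
    (fun m n _ hmn => antitone_sum_pow_apply hM hrow u hmn) (fun k => by positivity)
    (fun k l hkl => by simp only; gcongr) one_ne_zero
    (fun k => by simp [← Nat.mul_sub])).mp ?_
  simp only [hblock]
  refine Summable.of_nonneg_of_le (fun k => ?_) (fun k => ?_)
    ((summable_geometric_of_lt_one hr0 hr1).mul_left (N * r))
  · exact mul_nonneg (Nat.cast_nonneg N) (Finset.sum_nonneg fun v _ => pow_apply_nonneg hM _ u v)
  · rw [mul_assoc, ← pow_succ']
    exact mul_le_mul_of_nonneg_left (sum_pow_mul_apply_le_pow hM hr0 hr _ u) (Nat.cast_nonneg N)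

theorem summable_pow_of_exists_sum_pow_apply_lt_one (hleak : ∀ u, ∃ n, ∑ v, (M ^ n) u v < 1) :
    Summable fun n => M ^ n :=
  Pi.summable.mpr fun u => Pi.summable.mpr fun v =>
    (summable_sum_pow_apply hM hrow hleak u).of_nonneg_of_le (fun n => pow_apply_nonneg hM n u v)
      fun n => Finset.single_le_sum (fun w _ => pow_apply_nonneg hM n u w) (Finset.mem_univ v)

end Substochastic

end Matrix

section Killed

variable {V R : Type*}

theorem pad_of_le {n i : ℕ} (γ : Fin (n + 1) → V) (hi : i ≤ n) :
    pad γ i = γ ⟨i, Nat.lt_succ_of_le hi⟩ := by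
  simp [pad, min_eq_left hi]

noncomputable def killedMatrix [Zero R] (p : V → V → R) (W : Set V) : Matrix V V R :=
  Matrix.of fun u v => if u ∉ W ∧ v ∉ W then p u v else 0

@[simp]
theorem killedMatrix_apply [Zero R] (p : V → V → R) (W : Set V) (u v : V) :
    killedMatrix p W u v = if u ∉ W ∧ v ∉ W then p u v else 0 := rfl

theorem prod_killedMatrix_path [CommMonoidWithZero R] (p : V → V → R) (W : Set V) {n : ℕ}
    (γ : Fin (n + 1) → V) (h0 : γ 0 ∉ W) :
    ∏ k : Fin n, killedMatrix p W (γ k.castSucc) (γ k.succ) =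
      if ∀ i, γ i ∉ W then ∏ k : Fin n, p (γ k.castSucc) (γ k.succ) else 0 := by
  split_ifs with h
  · exact Finset.prod_congr rfl fun k _ => if_pos ⟨h _, h _⟩
  · obtain ⟨i, hi⟩ := not_forall_not.mp h
    obtain ⟨k, rfl⟩ := Fin.exists_succ_eq.mpr (ne_of_apply_ne γ fun h => h0 (h ▸ hi))
    exact Finset.prod_eq_zero (Finset.mem_univ k) (if_neg fun h => h.2 hi)

theorem killedMatrix_nonneg {p : V → V → ℝ} (hnn : ∀ u v, 0 ≤ p u v) {W : Set V} (u v : V) :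
    0 ≤ killedMatrix p W u v := by
  rw [killedMatrix_apply]
  split_ifs
  exacts [hnn u v, le_rfl]

theorem killedMatrix_le {p : V → V → ℝ} (hnn : ∀ u v, 0 ≤ p u v) {W : Set V} (u v : V) :
    killedMatrix p W u v ≤ p u v := by
  rw [killedMatrix_apply]
  split_ifs
  exacts [le_rfl, hnn u v]

variable [Fintype V]

theorem sum_killedMatrix_le_one {p : V → V → ℝ} (hnn : ∀ u v, 0 ≤ p u v)
    (hrow : ∀ u, ∑ v, p u v ≤ 1) {W : Set V} (u : V) : ∑ v, killedMatrix p W u v ≤ 1 :=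
  (Finset.sum_le_sum fun v _ => killedMatrix_le hnn u v).trans (hrow u)

theorem sum_killedMatrix_lt_one {p : V → V → ℝ} (hnn : ∀ u v, 0 ≤ p u v)
    (hrow : ∀ u, ∑ v, p u v ≤ 1) {W : Set V} {x y : V} (hxy : 0 < p x y)
    (hW : x ∈ W ∨ y ∈ W) : ∑ v, killedMatrix p W x v < 1 :=
  calc ∑ v, killedMatrix p W x v < ∑ v, p x v :=
        Finset.sum_lt_sum (fun v _ => killedMatrix_le hnn x v) ⟨y, Finset.mem_univ y, by
          rwa [killedMatrix_apply, if_neg (by tauto)]⟩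
    _ ≤ 1 := hrow x

theorem exists_leak_killedMatrix {p : V → V → ℝ} (hnn : ∀ u v, 0 ≤ p u v)
    (hrow : ∀ u, ∑ v, p u v ≤ 1) {W : Set V}
    (hreach : ∀ u, ∃ w ∈ W, Relation.ReflTransGen (fun x y => 0 < p x y) u w) (u : V) :
    ∃ c, Relation.ReflTransGen (fun x y => 0 < killedMatrix p W x y) u c ∧
      ∑ v, killedMatrix p W c v < 1 := by
  obtain ⟨w, hw, huw⟩ := hreach u
  induction huw using Relation.ReflTransGen.head_induction_on with
  | refl => exact ⟨w, .refl, by simp [hw]⟩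
  | @head x y hxy _ ih =>
    by_cases hW : x ∈ W ∨ y ∈ W
    · exact ⟨x, .refl, sum_killedMatrix_lt_one hnn hrow hxy hW⟩
    · obtain ⟨c, hyc, hc⟩ := ih
      refine ⟨c, .head ?_ hyc, hc⟩
      rwa [killedMatrix_apply, if_pos (by tauto)]

variable [DecidableEq V]

theorem green_eq_tsum_pow_killedMatrix (p : V → V → ℝ) {W : Set V} {a : V} (ha : a ∉ W) :
    green p W a = ∑' n, (killedMatrix p W ^ n) a a := by
  refine tsum_congr fun n => ?_
  rw [Matrix.pow_apply_eq_sum_paths]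
  refine Finset.sum_congr rfl fun γ _ => ?_
  have hfirst : pad γ 0 = γ 0 := pad_of_le γ n.zero_le
  have hlast : pad γ n = γ (Fin.last n) := pad_of_le γ le_rfl
  have hall : (∀ i ≤ n, pad γ i ∉ W) ↔ ∀ i, γ i ∉ W :=
    ⟨fun h i => pad_of_le γ i.is_le ▸ h i i.is_le, fun h i hi => pad_of_le γ hi ▸ h _⟩
  have hprod : ∏ k ∈ Finset.range n, p (pad γ k) (pad γ (k + 1)) =
      ∏ k : Fin n, p (γ k.castSucc) (γ k.succ) := by
    rw [← Fin.prod_univ_eq_prod_range]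
    exact Finset.prod_congr rfl fun k _ => by rw [pad_of_le γ k.is_lt.le, pad_of_le γ k.is_lt]; rfl
  by_cases h0 : γ 0 = a
  · rw [prod_killedMatrix_path p W γ (h0 ▸ ha), hfirst, hlast, hprod]
    simp only [h0, true_and, hall, ite_and]
  · simp [hfirst, h0]

theorem adjugate_one_sub_killedMatrix_apply_self [CommRing R] (p : V → V → R) (W : Set V)
    (b : V) : (1 - killedMatrix p W).adjugate b b = (1 - killedMatrix p (W ∪ {b})).det := by
  refine Matrix.adjugate_apply_self_eq_det (funext fun j => ?_) (fun i hi => ?_)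
    fun i hi j hj => ?_
  · by_cases hj : j = b
    · subst hj; simp
    · simp [hj, Ne.symm hj]
  · simp [hi]
  · simp [Matrix.one_apply, hi, hj]

section Reachable

variable {p : V → V → ℝ} (hnn : ∀ u v, 0 ≤ p u v) (hrow : ∀ u, ∑ v, p u v ≤ 1) {W : Set V}
  (hreach : ∀ u, ∃ w ∈ W, Relation.ReflTransGen (fun x y => 0 < p x y) u w)
include hnn hrow hreach

theorem summable_pow_killedMatrix : Summable fun n => killedMatrix p W ^ n :=
  Matrix.summable_pow_of_exists_sum_pow_apply_lt_one (killedMatrix_nonneg hnn)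
    (sum_killedMatrix_le_one hnn hrow) fun u =>
    have ⟨_, huc, hc⟩ := exists_leak_killedMatrix hnn hrow hreach u
    Matrix.exists_sum_pow_apply_lt_one (killedMatrix_nonneg hnn)
      (sum_killedMatrix_le_one hnn hrow) huc hc

theorem one_sub_killedMatrix_mul_tsum_pow :
    (1 - killedMatrix p W) * ∑' n, killedMatrix p W ^ n = 1 :=
  (summable_pow_killedMatrix hnn hrow hreach).one_sub_mul_tsum_pow

theorem det_one_sub_killedMatrix_ne_zero : (1 - killedMatrix p W).det ≠ 0 :=
  (Matrix.isUnit_det_of_right_inverse (one_sub_killedMatrix_mul_tsum_pow hnn hrow hreach)).ne_zero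

theorem green_eq_det_div {a : V} (ha : a ∉ W) :
    green p W a = (1 - killedMatrix p (W ∪ {a})).det / (1 - killedMatrix p W).det := by
  have hsum := summable_pow_killedMatrix hnn hrow hreach
  have hentry : (∑' n, killedMatrix p W ^ n) a a = ∑' n, (killedMatrix p W ^ n) a a :=
    (congrFun (tsum_apply hsum) a).trans (tsum_apply (Pi.summable.mp hsum a))
  rw [green_eq_tsum_pow_killedMatrix p ha, ← hentry,
    ← Matrix.inv_eq_right_inv (one_sub_killedMatrix_mul_tsum_pow hnn hrow hreach),
    Matrix.inv_def, Matrix.smul_apply, adjugate_one_sub_killedMatrix_apply_self,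
    Ring.inverse_eq_inv, smul_eq_mul, div_eq_inv_mul]

end Reachable

end Killed

theorem stmt15_general {V : Type*} [Fintype V]
    (p : V → V → ℝ) (hnn : ∀ u v, 0 ≤ p u v) (hrow : ∀ u, ∑ v, p u v = 1)
    (hirr : ∀ u v, Relation.ReflTransGen (fun a b => 0 < p a b) u v)
    (Z : Set V) (hZ : Z.Nonempty) (a b : V) (ha : a ∉ Z) (hb : b ∉ Z) :
    green p Z b * green p (Z ∪ {b}) a = green p Z a * green p (Z ∪ {a}) b := by
  rcases eq_or_ne a b with rfl | hab
  · rfl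
  have hrow' : ∀ u, ∑ v, p u v ≤ 1 := fun u => (hrow u).le
  have hreach : ∀ W, Z ⊆ W → ∀ u, ∃ w ∈ W, Relation.ReflTransGen (fun x y => 0 < p x y) u w :=
    fun W hW u => ⟨hZ.some, hW hZ.some_mem, hirr u _⟩
  have hZa := hreach (Z ∪ {a}) Set.subset_union_left
  have hZb := hreach (Z ∪ {b}) Set.subset_union_left
  rw [green_eq_det_div hnn hrow' (hreach Z le_rfl) ha,
    green_eq_det_div hnn hrow' (hreach Z le_rfl) hb,
    green_eq_det_div hnn hrow' hZb (by simp [ha, hab]),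
    green_eq_det_div hnn hrow' hZa (by simp [hb, hab.symm]), Set.union_right_comm]
  have hdetZa := det_one_sub_killedMatrix_ne_zero hnn hrow' hZa
  have hdetZb := det_one_sub_killedMatrix_ne_zero hnn hrow' hZb
  field_simp

/-- Lawler's Green function identity: for an irreducible Markov chain, a
nonempty set `Z` of states, and two states `a, b ∉ Z` with at least two states outside
`Z`, one has `G_Z(b,b) · G_{Z∪{b}}(a,a) = G_Z(a,a) · G_{Z∪{a}}(b,b)`. -/
theorem stmt15 {V : Type*} [Fintype V] [DecidableEq V]
    (p : V → V → ℝ) (hnn : ∀ u v, 0 ≤ p u v) (hrow : ∀ u, ∑ v, p u v = 1)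
    (hirr : ∀ u v, Relation.ReflTransGen (fun a b => 0 < p a b) u v)
    (Z : Set V) (hZ : Z.Nonempty) (a b : V) (ha : a ∉ Z) (hb : b ∉ Z)
    (h2 : Set.Nontrivial Zᶜ) :
    green p Z b * green p (Z ∪ {b}) a = green p Z a * green p (Z ∪ {a}) b :=
  stmt15_general p hnn hrow hirr Z hZ a b ha hb
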